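/- Let α ∈ (1,2) and C > 0, assume ν̄(x) ~ C x^{−α} as x → ∞, and let κ^{α,1} : [0,∞) → [0,∞) be the inverse function of y ↦ y + K y^α, where K = C Γ(2−α)/(m(α−1)). Then for every z ≥ 0, lim_{t→(1/m)⁻} (1−mt)^{−1/(α−1)} κ^{(t)}((1−mt)^{α/(α−1)} z) = κ^{α,1}(z). -/

import Mathlib

/-!
Write `m = ∫ l dν` and `φ(ρ) = ∫ (e^{-ρl} - 1 + ρl) ν(dl)` (`laplaceRemainder`), so that
`-Ψ^(t)(ρ) = (1 - mt) ρ + t φ(ρ)`. By the layer-cake formula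
`φ(ρ) = ∫_0^∞ ν̄(s) ρ (1 - e^{-ρs}) ds`; after the substitution `s = u/ρ`, the bound
`ν̄(x) ≤ M x^{-α}` (the tail hypothesis for large `x`, Markov's inequality for small `x`) lets
dominated convergence give `φ(ρ)/ρ^α → C ∫_0^∞ (1 - e^{-u}) u^{-α} du = C Γ(2-α)/(α-1)`
as `ρ → 0+`. Hence, with `ε = 1 - mt`, the monotone functions
`y ↦ ε^{-α/(α-1)} (-Ψ^(t))(ε^{1/(α-1)} y)` converge pointwise to the strictly increasing
`y ↦ y + K y^α`, and the rescaled `κ^(t)(ε^{α/(α-1)} z)` solve the corresponding equations `= z`;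
solutions of monotone equations converge to the solution of the strictly monotone limit equation.
-/

open MeasureTheory Filter

/-- The Laplace exponent `Ψ^(t)(ρ) = -ρ + t ∫_0^∞ (1 - e^{-ρ l}) ν(dl)`. -/
noncomputable def Psi (ν : Measure ℝ) (t ρ : ℝ) : ℝ :=
  -ρ + t * ∫ l, (1 - Real.exp (-(ρ * l))) ∂ν

open Set Real Topology

lemma one_sub_exp_neg_nonneg {x : ℝ} (hx : 0 ≤ x) : 0 ≤ 1 - exp (-x) := by
  simpa using exp_le_one_iff.2 (neg_nonpos.2 hx)

lemma one_sub_exp_neg_le_self (x : ℝ) : 1 - exp (-x) ≤ x := by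
  linarith [one_sub_le_exp_neg x]

lemma one_sub_exp_neg_le_one (x : ℝ) : 1 - exp (-x) ≤ 1 := by
  linarith [exp_pos (-x)]

lemma one_sub_exp_neg_mul_rpow_nonneg {u : ℝ} (hu : 0 ≤ u) (p : ℝ) :
    0 ≤ (1 - exp (-u)) * u ^ p :=
  mul_nonneg (one_sub_exp_neg_nonneg hu) (rpow_nonneg hu p)

lemma one_sub_exp_neg_mul_rpow_le_rpow {u : ℝ} (hu : 0 ≤ u) (p : ℝ) :
    (1 - exp (-u)) * u ^ p ≤ u ^ p :=
  mul_le_of_le_one_left (rpow_nonneg hu p) (one_sub_exp_neg_le_one u)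

lemma one_sub_exp_neg_mul_rpow_le_rpow_add_one {u : ℝ} (hu : 0 < u) (p : ℝ) :
    (1 - exp (-u)) * u ^ p ≤ u ^ (p + 1) := by
  rw [rpow_add_one hu.ne']
  nlinarith [one_sub_exp_neg_le_self u, rpow_nonneg hu.le p]

lemma integrableOn_one_sub_exp_neg_mul_rpow {α : ℝ} (hα1 : 1 < α) (hα2 : α < 2) :
    IntegrableOn (fun u : ℝ => (1 - exp (-u)) * u ^ (-α)) (Ioi 0) := by
  have hmeas : AEStronglyMeasurable (fun u : ℝ => (1 - exp (-u)) * u ^ (-α)) :=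
    (by fun_prop : Measurable fun u : ℝ => (1 - exp (-u)) * u ^ (-α)).aestronglyMeasurable
  have hnorm {u : ℝ} (hu : 0 < u) : ‖(1 - exp (-u)) * u ^ (-α)‖ = (1 - exp (-u)) * u ^ (-α) :=
    Real.norm_of_nonneg (one_sub_exp_neg_mul_rpow_nonneg hu.le _)
  rw [← Ioc_union_Ioi_eq_Ioi zero_le_one, integrableOn_union]
  constructor
  · have hp : IntegrableOn (fun u : ℝ => u ^ (-α + 1)) (Ioc 0 1) := by
      rw [← intervalIntegrable_iff_integrableOn_Ioc_of_le zero_le_one]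
      exact intervalIntegral.intervalIntegrable_rpow' (r := -α + 1) (by linarith)
    refine hp.mono' hmeas.restrict ((ae_restrict_mem measurableSet_Ioc).mono fun u hu => ?_)
    rw [hnorm hu.1]
    exact one_sub_exp_neg_mul_rpow_le_rpow_add_one hu.1 _
  · refine (integrableOn_Ioi_rpow_of_lt (a := -α) (by linarith) one_pos).mono' hmeas.restrict
      ((ae_restrict_mem measurableSet_Ioi).mono fun u (hu : 1 < u) => ?_)
    rw [hnorm (one_pos.trans hu)]
    exact one_sub_exp_neg_mul_rpow_le_rpow (zero_le_one.trans hu.le) _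

lemma integral_one_sub_exp_neg_mul_rpow {α : ℝ} (hα1 : 1 < α) (hα2 : α < 2) :
    ∫ u in Ioi (0 : ℝ), (1 - exp (-u)) * u ^ (-α) = Gamma (2 - α) / (α - 1) := by
  set F : ℝ → ℝ := fun u => (1 - exp (-u)) * u ^ (-α + 1)
  have hderiv : ∀ u ∈ Ioi (0 : ℝ), HasDerivAt F
      (exp (-u) * u ^ (-α + 1) + (1 - α) * ((1 - exp (-u)) * u ^ (-α))) u := by
    intro u hu
    have h1 : HasDerivAt (fun u : ℝ => 1 - exp (-u)) (exp (-u)) u := by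
      simpa using ((hasDerivAt_neg u).exp).const_sub 1
    have h2 := hasDerivAt_rpow_const (p := -α + 1) (x := u) (Or.inl (ne_of_gt hu))
    refine (h1.mul h2).congr_deriv ?_
    rw [show -α + 1 - 1 = -α by ring]
    ring
  have hF0 : ContinuousWithinAt F (Ici 0) 0 := by
    have hlim : Tendsto (fun u : ℝ => u ^ (-α + 1 + 1)) (𝓝[≥] 0) (𝓝 0) := by
      have := (continuousAt_rpow_const 0 (-α + 1 + 1) (Or.inr (by linarith))).tendsto
      rw [zero_rpow (by linarith)] at this
      exact this.mono_left nhdsWithin_le_nhds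
    have hF0 : F 0 = 0 := by simp [F, zero_rpow (show -α + 1 ≠ 0 by linarith)]
    rw [ContinuousWithinAt, hF0]
    refine tendsto_of_tendsto_of_tendsto_of_le_of_le' tendsto_const_nhds hlim ?_ ?_
    · filter_upwards [self_mem_nhdsWithin] with u (hu : 0 ≤ u)
      exact one_sub_exp_neg_mul_rpow_nonneg hu _
    · filter_upwards [self_mem_nhdsWithin] with u (hu : 0 ≤ u)
      rcases hu.eq_or_lt with rfl | hu
      · simp [F, hF0, zero_rpow (show -α + 1 + 1 ≠ 0 by linarith)]
      · exact one_sub_exp_neg_mul_rpow_le_rpow_add_one hu _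
  have hFtop : Tendsto F atTop (𝓝 0) := by
    have hlim : Tendsto (fun u : ℝ => u ^ (-α + 1)) atTop (𝓝 0) := by
      have := tendsto_rpow_neg_atTop (show 0 < α - 1 by linarith)
      rwa [neg_sub, sub_eq_neg_add] at this
    refine tendsto_of_tendsto_of_tendsto_of_le_of_le' tendsto_const_nhds hlim ?_ ?_
    · filter_upwards [eventually_ge_atTop 0] with u hu
      exact one_sub_exp_neg_mul_rpow_nonneg hu _
    · filter_upwards [eventually_ge_atTop 0] with u hu
      exact one_sub_exp_neg_mul_rpow_le_rpow hu _
  have hGamma := GammaIntegral_convergent (show 0 < 2 - α by linarith)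
  rw [show 2 - α - 1 = -α + 1 by ring] at hGamma
  have hint := (integrableOn_one_sub_exp_neg_mul_rpow hα1 hα2).const_mul (1 - α)
  have key := integral_Ioi_of_hasDerivAt_of_tendsto hF0 hderiv (hGamma.add hint) hFtop
  rw [integral_add hGamma hint, integral_const_mul, show -α + 1 = 2 - α - 1 by ring,
    ← Gamma_eq_integral (by linarith)] at key
  simp only [F, neg_zero, exp_zero, sub_self, zero_mul] at key
  rw [eq_div_iff (by linarith)]
  linarith

lemma exp_neg_sub_one_add_nonneg (x : ℝ) : 0 ≤ exp (-x) - 1 + x := by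
  linarith [add_one_le_exp (-x)]

lemma exp_neg_sub_one_add_le_self {x : ℝ} (hx : 0 ≤ x) : exp (-x) - 1 + x ≤ x := by
  linarith [exp_le_one_iff.2 (neg_nonpos.2 hx)]

lemma exp_neg_sub_one_add_monotoneOn : MonotoneOn (fun x : ℝ => exp (-x) - 1 + x) (Ici 0) := by
  intro x (hx : 0 ≤ x) y _ hxy
  have : exp (-x) - exp (-y) ≤ y - x :=
    calc exp (-x) - exp (-y) = exp (-x) * (1 - exp (-(y - x))) := by
          rw [mul_sub, ← exp_add]; ring_nf
      _ ≤ 1 * (y - x) := mul_le_mul (exp_le_one_iff.2 (neg_nonpos.2 hx))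
          (one_sub_exp_neg_le_self _) (one_sub_exp_neg_nonneg (sub_nonneg.2 hxy)) zero_le_one
      _ = y - x := one_mul _
  dsimp only
  linarith

lemma integral_intervalIntegral_eq_integral_measureReal_lt_mul {Ω : Type*} [MeasurableSpace Ω]
    {μ : Measure Ω} {f : Ω → ℝ} {g : ℝ → ℝ} (hf_nn : 0 ≤ᵐ[μ] f) (hf : Integrable f μ)
    (hg : Continuous g) (hg_nn : ∀ t ≥ 0, 0 ≤ g t)
    (hG : Integrable (fun ω => ∫ t in 0..f ω, g t) μ) :
    ∫ ω, (∫ t in 0..f ω, g t) ∂μ = ∫ t in Ioi 0, μ.real {a | t < f a} * g t := by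
  have hg_nn' : ∀ᵐ t ∂volume.restrict (Ioi 0), 0 ≤ g t :=
    (ae_restrict_mem measurableSet_Ioi).mono fun t ht => hg_nn t (le_of_lt ht)
  have key := lintegral_comp_eq_lintegral_meas_lt_mul μ hf_nn hf.aemeasurable
    (fun _ _ => hg.intervalIntegrable _ _) hg_nn'
  have hG_nn : 0 ≤ᵐ[μ] fun ω => ∫ t in 0..f ω, g t := hf_nn.mono fun ω hω =>
    intervalIntegral.integral_nonneg hω fun t ht => hg_nn t ht.1
  have htail_meas : Measurable fun t : ℝ => μ.real {a | t < f a} :=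
    (Antitone.measurable fun s t hst => measure_mono fun a (ha : t < f a) => hst.trans_lt ha)
      |>.ennreal_toReal
  have hrhs := integral_eq_lintegral_of_nonneg_ae
    (hg_nn'.mono fun t ht => mul_nonneg measureReal_nonneg ht)
    (htail_meas.mul hg.measurable).aestronglyMeasurable
  rw [integral_eq_lintegral_of_nonneg_ae hG_nn hG.aestronglyMeasurable, key, hrhs]
  congr 1
  refine setLIntegral_congr_fun measurableSet_Ioi fun t (ht : 0 < t) => ?_
  rw [ENNReal.ofReal_mul measureReal_nonneg, ofReal_measureReal (hf.measure_gt_lt_top ht).ne]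

lemma integral_mul_one_sub_exp_neg_mul (ρ l : ℝ) :
    ∫ s in (0 : ℝ)..l, ρ * (1 - exp (-(ρ * s))) = exp (-(ρ * l)) - 1 + ρ * l := by
  have hderiv (s : ℝ) :
      HasDerivAt (fun s => ρ * s + exp (-(ρ * s))) (ρ * (1 - exp (-(ρ * s)))) s := by
    have := ((hasDerivAt_id s).const_mul ρ).add ((hasDerivAt_id s).const_mul ρ).neg.exp
    simp only [id, mul_one, Pi.neg_apply] at this
    exact this.congr_deriv (by ring)
  rw [intervalIntegral.integral_eq_sub_of_hasDerivAt (fun s _ => hderiv s)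
    ((by fun_prop : Continuous fun s => ρ * (1 - exp (-(ρ * s)))).intervalIntegrable _ _)]
  simp only [mul_zero, neg_zero, exp_zero, zero_add]
  ring

lemma inv_mul_rpow {ρ u : ℝ} (hρ : 0 < ρ) (hu : 0 ≤ u) (p : ℝ) :
    (ρ⁻¹ * u) ^ p = ρ ^ (-p) * u ^ p := by
  rw [mul_rpow (inv_nonneg.2 hρ.le) hu, inv_rpow hρ.le, rpow_neg hρ.le]

lemma rpow_neg_mul_comp_inv_mul_le {f : ℝ → ℝ} {α M ρ u : ℝ}
    (hf : ∀ x > 0, f x ≤ M * x ^ (-α)) (hρ : 0 < ρ) (hu : 0 < u) :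
    ρ ^ (-α) * f (ρ⁻¹ * u) ≤ M * u ^ (-α) :=
  calc ρ ^ (-α) * f (ρ⁻¹ * u) ≤ ρ ^ (-α) * (M * (ρ⁻¹ * u) ^ (-α)) := by
        gcongr; exact hf _ (by positivity)
    _ = M * u ^ (-α) := by
        rw [inv_mul_rpow hρ hu.le, neg_neg, rpow_neg hρ.le]
        field_simp

lemma tendsto_rpow_neg_mul_comp_inv_mul {f : ℝ → ℝ} {α C u : ℝ}
    (hf : Tendsto (fun x => x ^ α * f x) atTop (𝓝 C)) (hu : 0 < u) :
    Tendsto (fun ρ => ρ ^ (-α) * f (ρ⁻¹ * u)) (𝓝[>] 0) (𝓝 (C * u ^ (-α))) := by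
  refine ((hf.comp (tendsto_inv_nhdsGT_zero.atTop_mul_const hu)).mul_const (u ^ (-α))).congr'
    (eventually_nhdsWithin_of_forall fun ρ (hρ : 0 < ρ) => ?_)
  simp only [Function.comp, inv_mul_rpow hρ hu.le]
  rw [rpow_neg hu.le]
  field_simp

lemma tendsto_solution_of_tendsto_monotoneOn {ι : Type*} {l : Filter ι} {G : ι → ℝ → ℝ}
    {g : ℝ → ℝ} {X : ι → ℝ} {y z : ℝ} (hG : ∀ᶠ t in l, MonotoneOn (G t) (Ici 0))
    (hGg : ∀ y > 0, Tendsto (G · y) l (𝓝 (g y))) (hg : StrictMonoOn g (Ici 0))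
    (hX : ∀ᶠ t in l, 0 ≤ X t ∧ G t (X t) = z) (hy : 0 ≤ y) (hgy : g y = z) :
    Tendsto X l (𝓝 y) := by
  rw [tendsto_order]
  constructor
  · intro a hay
    rcases lt_or_ge a 0 with ha | ha
    · filter_upwards [hX] with t ht using ha.trans_le ht.1
    · obtain ⟨b, hab, hby⟩ := exists_between hay
      have hb : 0 < b := ha.trans_lt hab
      have hzb : g b < z := hgy ▸ hg hb.le hy hby
      filter_upwards [hG, hX, (hGg b hb).eventually_lt_const hzb] with t hGt ⟨hXt, hGX⟩ hGb
      by_contra! hXa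
      exact (hGX ▸ hGb).not_ge (hGt hXt hb.le (hXa.trans hab.le))
  · intro b hyb
    have hzb : z < g b := hgy ▸ hg hy (hy.trans hyb.le) hyb
    filter_upwards [hG, hX, (hGg b (hy.trans_lt hyb)).eventually_const_lt hzb]
      with t hGt ⟨hXt, hGX⟩ hGb
    by_contra! hbX
    exact (hGX ▸ hGb).not_ge (hGt (hy.trans hyb.le) hXt hbX)

noncomputable def laplaceRemainder (ν : Measure ℝ) (ρ : ℝ) : ℝ :=
  ∫ l, (exp (-(ρ * l)) - 1 + ρ * l) ∂ν

section LaplaceExponent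

variable {ν : Measure ℝ}

lemma integrable_exp_neg_mul_sub_one_add (hν : ∀ᵐ l ∂ν, 0 ≤ l)
    (hint : Integrable (fun l : ℝ => l) ν) {ρ : ℝ} (hρ : 0 ≤ ρ) :
    Integrable (fun l : ℝ => exp (-(ρ * l)) - 1 + ρ * l) ν := by
  refine (hint.const_mul ρ).mono' (by fun_prop) (hν.mono fun l hl => ?_)
  rw [Real.norm_of_nonneg (exp_neg_sub_one_add_nonneg _)]
  exact exp_neg_sub_one_add_le_self (mul_nonneg hρ hl)

lemma neg_Psi_eq (hν : ∀ᵐ l ∂ν, 0 ≤ l) (hint : Integrable (fun l : ℝ => l) ν)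
    (t : ℝ) {ρ : ℝ} (hρ : 0 ≤ ρ) :
    -Psi ν t ρ = (1 - t * ∫ l, l ∂ν) * ρ + t * laplaceRemainder ν ρ := by
  have h : ∫ l, (1 - exp (-(ρ * l))) ∂ν = ρ * ∫ l, l ∂ν - laplaceRemainder ν ρ := by
    rw [laplaceRemainder, ← integral_const_mul,
      ← integral_sub (hint.const_mul ρ) (integrable_exp_neg_mul_sub_one_add hν hint hρ)]
    congr 1 with l
    ring
  rw [Psi, h]
  ring

lemma laplaceRemainder_monotoneOn (hν : ∀ᵐ l ∂ν, 0 ≤ l)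
    (hint : Integrable (fun l : ℝ => l) ν) : MonotoneOn (laplaceRemainder ν) (Ici 0) := by
  intro ρ₁ (hρ₁ : 0 ≤ ρ₁) ρ₂ (hρ₂ : 0 ≤ ρ₂) hρ
  refine integral_mono_ae (integrable_exp_neg_mul_sub_one_add hν hint hρ₁)
    (integrable_exp_neg_mul_sub_one_add hν hint hρ₂) (hν.mono fun l hl => ?_)
  exact exp_neg_sub_one_add_monotoneOn (mul_nonneg hρ₁ hl) (mul_nonneg hρ₂ hl)
    (mul_le_mul_of_nonneg_right hρ hl)

lemma neg_Psi_monotoneOn (hν : ∀ᵐ l ∂ν, 0 ≤ l) (hint : Integrable (fun l : ℝ => l) ν)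
    {t : ℝ} (ht : 0 ≤ t) (htm : t * ∫ l, l ∂ν ≤ 1) :
    MonotoneOn (fun ρ => -Psi ν t ρ) (Ici 0) := by
  intro ρ₁ (hρ₁ : 0 ≤ ρ₁) ρ₂ (hρ₂ : 0 ≤ ρ₂) hρ
  simp only [neg_Psi_eq hν hint t hρ₁, neg_Psi_eq hν hint t hρ₂]
  have := laplaceRemainder_monotoneOn hν hint hρ₁ hρ₂ hρ
  gcongr

lemma measureReal_Ioi_le_integral_div (hν : ∀ᵐ l ∂ν, 0 ≤ l)
    (hint : Integrable (fun l : ℝ => l) ν) {x : ℝ} (hx : 0 < x) :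
    ν.real (Ioi x) ≤ (∫ l, l ∂ν) / x := by
  rw [le_div_iff₀' hx]
  calc x * ν.real (Ioi x) ≤ x * ν.real {l | x ≤ l} := by
        gcongr
        · exact (hint.measure_ge_lt_top hx).ne
        · exact fun l (hl : x < l) => hl.le
    _ ≤ ∫ l, l ∂ν := mul_meas_ge_le_integral_of_nonneg hν hint x

lemma exists_measureReal_Ioi_le_mul_rpow_neg (hν : ∀ᵐ l ∂ν, 0 ≤ l)
    (hint : Integrable (fun l : ℝ => l) ν) {α C : ℝ} (hα : 1 ≤ α)
    (htail : Tendsto (fun x : ℝ => x ^ α * ν.real (Ioi x)) atTop (𝓝 C)) :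
    ∃ M, ∀ x > 0, ν.real (Ioi x) ≤ M * x ^ (-α) := by
  obtain ⟨X, hX⟩ := eventually_atTop.1 (htail.eventually (eventually_le_nhds (lt_add_one C)))
  refine ⟨max (C + 1) ((∫ l, l ∂ν) * X ^ (α - 1)), fun x hx => ?_⟩
  rcases le_or_gt X x with hXx | hxX
  · calc ν.real (Ioi x) = (x ^ α * ν.real (Ioi x)) * x ^ (-α) := by
          rw [rpow_neg hx.le]; field_simp
      _ ≤ (C + 1) * x ^ (-α) := by gcongr; exact hX x hXx
      _ ≤ _ := by gcongr; exact le_max_left _ _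
  · have hm : 0 ≤ ∫ l, l ∂ν := integral_nonneg_of_ae hν
    calc ν.real (Ioi x) ≤ (∫ l, l ∂ν) / x := measureReal_Ioi_le_integral_div hν hint hx
      _ = (∫ l, l ∂ν) * x ^ (α - 1) * x ^ (-α) := by
          rw [mul_assoc, ← rpow_add hx, show α - 1 + -α = -1 by ring, rpow_neg_one, div_eq_mul_inv]
      _ ≤ (∫ l, l ∂ν) * X ^ (α - 1) * x ^ (-α) := by gcongr
      _ ≤ _ := by gcongr; exact le_max_right _ _

lemma laplaceRemainder_eq_integral_tail (hν : ∀ᵐ l ∂ν, 0 ≤ l)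
    (hint : Integrable (fun l : ℝ => l) ν) {ρ : ℝ} (hρ : 0 ≤ ρ) :
    laplaceRemainder ν ρ = ∫ s in Ioi 0, ν.real (Ioi s) * (ρ * (1 - exp (-(ρ * s)))) := by
  have h := integral_intervalIntegral_eq_integral_measureReal_lt_mul hν hint
    (g := fun s => ρ * (1 - exp (-(ρ * s)))) (by fun_prop)
    (fun s hs => mul_nonneg hρ (one_sub_exp_neg_nonneg (mul_nonneg hρ hs)))
    (by simpa only [integral_mul_one_sub_exp_neg_mul]
      using integrable_exp_neg_mul_sub_one_add hν hint hρ)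
  simp only [integral_mul_one_sub_exp_neg_mul] at h
  exact h

lemma laplaceRemainder_div_rpow_eq (hν : ∀ᵐ l ∂ν, 0 ≤ l)
    (hint : Integrable (fun l : ℝ => l) ν) (α : ℝ) {ρ : ℝ} (hρ : 0 < ρ) :
    laplaceRemainder ν ρ / ρ ^ α =
      ∫ u in Ioi 0, (1 - exp (-u)) * (ρ ^ (-α) * ν.real (Ioi (ρ⁻¹ * u))) := by
  have hsub := integral_comp_mul_left_Ioi
    (fun u => ν.real (Ioi (ρ⁻¹ * u)) * (ρ * (1 - exp (-u)))) 0 hρ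
  simp only [mul_zero, inv_mul_cancel_left₀ hρ.ne', smul_eq_mul] at hsub
  rw [laplaceRemainder_eq_integral_tail hν hint hρ.le, hsub, mul_div_assoc, ← integral_div,
    ← integral_const_mul]
  refine setIntegral_congr_fun measurableSet_Ioi fun u _ => ?_
  rw [rpow_neg hρ.le]
  field_simp

lemma tendsto_laplaceRemainder_div_rpow (hν : ∀ᵐ l ∂ν, 0 ≤ l)
    (hint : Integrable (fun l : ℝ => l) ν) {α C : ℝ} (hα1 : 1 < α) (hα2 : α < 2)
    (htail : Tendsto (fun x : ℝ => x ^ α * ν.real (Ioi x)) atTop (𝓝 C)) :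
    Tendsto (fun ρ => laplaceRemainder ν ρ / ρ ^ α) (𝓝[>] 0)
      (𝓝 (C * (Gamma (2 - α) / (α - 1)))) := by
  obtain ⟨M, hM⟩ := exists_measureReal_Ioi_le_mul_rpow_neg hν hint hα1.le htail
  rw [← integral_one_sub_exp_neg_mul_rpow hα1 hα2, ← integral_const_mul]
  refine Tendsto.congr' (eventually_nhdsWithin_of_forall fun ρ (hρ : 0 < ρ) =>
    (laplaceRemainder_div_rpow_eq hν hint α hρ).symm) ?_
  refine tendsto_integral_filter_of_dominated_convergence
    (fun u => M * ((1 - exp (-u)) * u ^ (-α))) ?_ ?_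
    ((integrableOn_one_sub_exp_neg_mul_rpow hα1 hα2).const_mul M) ?_
  · have htail_meas : Measurable fun x : ℝ => ν.real (Ioi x) :=
      (Antitone.measurable fun _ _ h => measure_mono (Ioi_subset_Ioi h)).ennreal_toReal
    exact Eventually.of_forall fun ρ => ((measurable_const.sub measurable_neg.exp).mul
      (measurable_const.mul (htail_meas.comp (measurable_const_mul _)))).aestronglyMeasurable
  · filter_upwards [self_mem_nhdsWithin] with ρ (hρ : 0 < ρ)
    filter_upwards [ae_restrict_mem measurableSet_Ioi] with u (hu : 0 < u)
    rw [Real.norm_of_nonneg (mul_nonneg (one_sub_exp_neg_nonneg hu.le)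
      (mul_nonneg (by positivity) measureReal_nonneg))]
    exact (mul_le_mul_of_nonneg_left (rpow_neg_mul_comp_inv_mul_le hM hρ hu)
      (one_sub_exp_neg_nonneg hu.le)).trans_eq (by ring)
  · filter_upwards [ae_restrict_mem measurableSet_Ioi] with u (hu : 0 < u)
    rw [mul_left_comm]
    exact (tendsto_rpow_neg_mul_comp_inv_mul htail hu).const_mul _

end LaplaceExponent

section Rescaling

variable {ν : Measure ℝ} {m α : ℝ}

lemma rescaled_neg_Psi_eq (hν : ∀ᵐ l ∂ν, 0 ≤ l) (hint : Integrable (fun l : ℝ => l) ν)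
    (hm : ∫ l, l ∂ν = m) (hα : 1 < α) {t y : ℝ} (het : 0 < 1 - m * t) (hy : 0 < y) :
    (1 - m * t) ^ (-(α / (α - 1))) * -Psi ν t ((1 - m * t) ^ (1 / (α - 1)) * y) =
      y + t * (laplaceRemainder ν ((1 - m * t) ^ (1 / (α - 1)) * y) /
        ((1 - m * t) ^ (1 / (α - 1)) * y) ^ α) * y ^ α := by
  set e := 1 - m * t
  set s := e ^ (1 / (α - 1))
  have hs : 0 < s := rpow_pos_of_pos het _
  have hes : e * s = e ^ (α / (α - 1)) := by
    rw [← rpow_one_add' het.le (by positivity)]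
    have : α - 1 ≠ 0 := by linarith
    congr 1
    field_simp
    ring
  have hsyα : (s * y) ^ α = e ^ (α / (α - 1)) * y ^ α := by
    rw [mul_rpow hs.le hy.le, ← rpow_mul het.le, one_div_mul_eq_div]
  rw [neg_Psi_eq hν hint t (by positivity), hm, mul_comm t m, hsyα, rpow_neg het.le, ← hes]
  have : 0 < y ^ α := rpow_pos_of_pos hy α
  field_simp
  ring

lemma rescaled_neg_Psi_monotoneOn (hν : ∀ᵐ l ∂ν, 0 ≤ l) (hint : Integrable (fun l : ℝ => l) ν)
    (hm : ∫ l, l ∂ν = m) {t : ℝ} (ht : 0 ≤ t) (het : 0 < 1 - m * t) (p q : ℝ) :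
    MonotoneOn (fun y => (1 - m * t) ^ p * -Psi ν t ((1 - m * t) ^ q * y)) (Ici 0) := by
  intro a (ha : 0 ≤ a) b (hb : 0 ≤ b) hab
  have hs : 0 < (1 - m * t) ^ q := rpow_pos_of_pos het _
  exact mul_le_mul_of_nonneg_left (neg_Psi_monotoneOn hν hint ht (by rw [hm]; linarith)
    (mem_Ici.2 (by positivity)) (mem_Ici.2 (by positivity)) (by gcongr)) (rpow_nonneg het.le _)

lemma tendsto_rescaled_neg_Psi (hν : ∀ᵐ l ∂ν, 0 ≤ l) (hint : Integrable (fun l : ℝ => l) ν)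
    (hm : ∫ l, l ∂ν = m) (hmpos : 0 < m) {C : ℝ} (hα1 : 1 < α) (hα2 : α < 2)
    (htail : Tendsto (fun x : ℝ => x ^ α * ν.real (Ioi x)) atTop (𝓝 C)) {y : ℝ} (hy : 0 < y) :
    Tendsto (fun t => (1 - m * t) ^ (-(α / (α - 1))) * -Psi ν t ((1 - m * t) ^ (1 / (α - 1)) * y))
      (𝓝[<] (1 / m)) (𝓝 (y + C * Gamma (2 - α) / (m * (α - 1)) * y ^ α)) := by
  have hp : 0 < 1 / (α - 1) := one_div_pos.2 (by linarith)
  have het : ∀ t ∈ Iio (1 / m), 0 < 1 - m * t := fun t ht =>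
    sub_pos.2 ((lt_div_iff₀' hmpos).1 ht)
  have hρ : Tendsto (fun t => (1 - m * t) ^ (1 / (α - 1)) * y) (𝓝[<] (1 / m)) (𝓝[>] 0) := by
    refine tendsto_nhdsWithin_iff.2 ⟨?_, eventually_nhdsWithin_of_forall fun t ht =>
      mul_pos (rpow_pos_of_pos (het t ht) _) hy⟩
    have hcont : Continuous fun t => (1 - m * t) ^ (1 / (α - 1)) * y :=
      ((continuous_const.sub (continuous_const.mul continuous_id)).rpow_const
        fun _ => Or.inr hp.le).mul continuous_const
    have h0 : (1 - m * (1 / m)) ^ (1 / (α - 1)) * y = 0 := by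
      rw [mul_one_div_cancel hmpos.ne', sub_self, zero_rpow hp.ne', zero_mul]
    exact h0 ▸ (hcont.tendsto (1 / m)).mono_left nhdsWithin_le_nhds
  have hlim := tendsto_const_nhds (x := y) |>.add
    (((tendsto_id.mono_left nhdsWithin_le_nhds).mul
      ((tendsto_laplaceRemainder_div_rpow hν hint hα1 hα2 htail).comp hρ)).mul_const (y ^ α))
  rw [show 1 / m * (C * (Gamma (2 - α) / (α - 1))) = C * Gamma (2 - α) / (m * (α - 1)) by
    field_simp] at hlim
  refine hlim.congr' (eventually_nhdsWithin_of_forall fun t ht => ?_)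
  exact (rescaled_neg_Psi_eq hν hint hm hα1 (het t ht) hy).symm

end Rescaling

theorem kappa_rescaled_limit_stable_general
    (ν : Measure ℝ) (hν0 : ν (Set.Iic 0) = 0)
    (hint : Integrable (fun l : ℝ => l) ν)
    (m : ℝ) (hm : m = ∫ l, l ∂ν) (hmpos : 0 < m)
    (α C : ℝ) (hα1 : 1 < α) (hα2 : α < 2) (hC : 0 < C)
    (htail : Tendsto (fun x : ℝ => x ^ α * (ν (Set.Ioi x)).toReal)
      atTop (nhds C))
    (κ : ℝ → ℝ → ℝ)
    (hκ : ∀ t : ℝ, 0 ≤ t → t < 1 / m → ∀ z : ℝ, 0 ≤ z →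
      0 ≤ κ t z ∧ -Psi ν t (κ t z) = z)
    (κα : ℝ → ℝ)
    (hκα : ∀ z : ℝ, 0 ≤ z → 0 ≤ κα z ∧
      κα z + (C * Real.Gamma (2 - α) / (m * (α - 1))) * κα z ^ α = z)
    (z : ℝ) (hz : 0 ≤ z) :
    Tendsto
      (fun t : ℝ =>
        (1 - m * t) ^ (-(1 / (α - 1))) * κ t ((1 - m * t) ^ (α / (α - 1)) * z))
      (nhdsWithin (1 / m) (Set.Iio (1 / m))) (nhds (κα z)) := by
  have hν : ∀ᵐ l ∂ν, 0 ≤ l :=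
    (measure_eq_zero_iff_ae_notMem.1 hν0).mono fun l hl => le_of_lt (not_le.1 hl)
  have hK : 0 ≤ C * Gamma (2 - α) / (m * (α - 1)) := by
    have := Gamma_pos_of_pos (show 0 < 2 - α by linarith)
    have : 0 < α - 1 := by linarith
    positivity
  have hT : ∀ᶠ t in 𝓝[<] (1 / m), 0 ≤ t ∧ t < 1 / m ∧ 0 < 1 - m * t := by
    filter_upwards [self_mem_nhdsWithin,
      nhdsWithin_le_nhds (Ici_mem_nhds (one_div_pos.2 hmpos))] with t ht ht0
    exact ⟨ht0, ht, sub_pos.2 ((lt_div_iff₀' hmpos).1 ht)⟩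
  refine tendsto_solution_of_tendsto_monotoneOn
    (G := fun t y => (1 - m * t) ^ (-(α / (α - 1))) * -Psi ν t ((1 - m * t) ^ (1 / (α - 1)) * y))
    (g := fun y => y + C * Gamma (2 - α) / (m * (α - 1)) * y ^ α) ?_
    (fun y hy => tendsto_rescaled_neg_Psi hν hint hm.symm hmpos hα1 hα2 htail hy) ?_ ?_
    (hκα z hz).1 (hκα z hz).2
  · filter_upwards [hT] with t ⟨ht0, _, het⟩
    exact rescaled_neg_Psi_monotoneOn hν hint hm.symm ht0 het _ _
  · exact fun a ha b hb hab => add_lt_add_of_lt_of_le hab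
      (mul_le_mul_of_nonneg_left (rpow_le_rpow ha hab.le (by linarith)) hK)
  · filter_upwards [hT] with t ⟨ht0, ht, het⟩
    obtain ⟨hκ0, hκz⟩ := hκ t ht0 ht _ (mul_nonneg (rpow_nonneg het.le _) hz)
    refine ⟨mul_nonneg (rpow_nonneg het.le _) hκ0, ?_⟩
    rw [← mul_assoc, ← rpow_add het, add_neg_cancel, rpow_zero, one_mul, hκz, ← mul_assoc,
      ← rpow_add het, neg_add_cancel, rpow_zero, one_mul]

/-- Let `ν` be a measure on `(0,∞)` with finite positive mean `m` whose tail satisfies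
`ν̄(x) ~ C x^{-α}` as `x → ∞`, with `α ∈ (1,2)`, `C > 0`. For `t ∈ [0,1/m)` let
`κ^(t)` be the inverse function of `-Ψ^(t)` on `[0,∞)`, and let `κ^{α,1}` be the
inverse function of `y ↦ y + K y^α` on `[0,∞)`, where `K = C Γ(2-α)/(m(α-1))`.
Then for every `z ≥ 0`,
`lim_{t→(1/m)⁻} (1-mt)^{-1/(α-1)} κ^(t)((1-mt)^{α/(α-1)} z) = κ^{α,1}(z)`. -/
theorem kappa_rescaled_limit_stable
    (ν : Measure ℝ) (hν0 : ν (Set.Iic 0) = 0)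
    (hint : Integrable (fun l : ℝ => l) ν)
    (m : ℝ) (hm : m = ∫ l, l ∂ν) (hmpos : 0 < m)
    (α C : ℝ) (hα1 : 1 < α) (hα2 : α < 2) (hC : 0 < C)
    (htail : Tendsto (fun x : ℝ => x ^ α * (ν (Set.Ioi x)).toReal)
      atTop (nhds C))
    (κ : ℝ → ℝ → ℝ)
    (hκ : ∀ t : ℝ, 0 ≤ t → t < 1 / m → ∀ z : ℝ, 0 ≤ z →
      0 ≤ κ t z ∧ -Psi ν t (κ t z) = z)
    (hκ' : ∀ t : ℝ, 0 ≤ t → t < 1 / m → ∀ ρ : ℝ, 0 ≤ ρ →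
      κ t (-Psi ν t ρ) = ρ)
    (κα : ℝ → ℝ)
    (hκα : ∀ z : ℝ, 0 ≤ z → 0 ≤ κα z ∧
      κα z + (C * Real.Gamma (2 - α) / (m * (α - 1))) * κα z ^ α = z)
    (hκα' : ∀ y : ℝ, 0 ≤ y →
      κα (y + (C * Real.Gamma (2 - α) / (m * (α - 1))) * y ^ α) = y)
    (z : ℝ) (hz : 0 ≤ z) :
    Tendsto
      (fun t : ℝ =>
        (1 - m * t) ^ (-(1 / (α - 1))) * κ t ((1 - m * t) ^ (α / (α - 1)) * z))
      (nhdsWithin (1 / m) (Set.Iio (1 / m))) (nhds (κα z)) :=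
  kappa_rescaled_limit_stable_general ν hν0 hint m hm hmpos α C hα1 hα2 hC htail κ hκ κα hκα z hz
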